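/- Theorem (Stationary hit probability). In the discrete-time caching model with equal-size objects, let (C_k) be any non-anticipative caching policy and (C^HR_k) an HR-E rule. If there exist real constants h^π and h^HR such that (1/K)·∑_{k=1}^K 1(R_k ∈ C_k) → h^π μ-almost everywhere and (1/K)·∑_{k=1}^K 1(R_k ∈ C^HR_k) → h^HR μ-almost everywhere as K → ∞, then h^HR ≥ h^π. -/

import Mathlib

/-!
Since the cache `C_k` is `ℱ_{k-1}`-measurable, conditioning on `ℱ_{k-1}` gives
`E[1(R_k ∈ C_k)] = E[∑_{i ∈ C_k} p_k(i)]`. Among all `B`-element sets, the HR-E cache maximises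
`∑_{i ∈ C} p_k(i)` pointwise, so at every step its expected hit indicator is the larger one.
The Cesàro averages are bounded by `1`, so by dominated convergence their expectations converge
to the almost-sure limits `h^π` and `h^HR`, which are therefore ordered as well.
-/

open MeasureTheory Filter Topology

namespace Finset

variable {α M : Type*} [AddCommMonoid M] [PartialOrder M] [IsOrderedAddMonoid M]
  {s t : Finset α} {f : α → M}

theorem sum_le_sum_of_card_eq_of_forall_le (hst : #s = #t) (h : ∀ i ∈ s, ∀ j ∈ t, f i ≤ f j) :
    ∑ i ∈ s, f i ≤ ∑ j ∈ t, f j := by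
  let e := equivOfCardEq hst
  calc ∑ i ∈ s, f i = ∑ x : s, f x := (sum_coe_sort s f).symm
    _ ≤ ∑ x : s, f (e x) := sum_le_sum fun x _ => h x x.2 (e x) (e x).2
    _ = ∑ j ∈ t, f j := (e.sum_comp fun y : t => f y).trans (sum_coe_sort t f)

theorem sum_le_sum_of_card_eq_of_forall_notMem_le [DecidableEq α] (hst : #s = #t)
    (h : ∀ i ∈ t, ∀ j ∉ t, f j ≤ f i) : ∑ i ∈ s, f i ≤ ∑ i ∈ t, f i := by
  rw [← sum_inter_add_sum_sdiff s t, ← sum_inter_add_sum_sdiff t s, inter_comm t s]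
  gcongr 1
  exact sum_le_sum_of_card_eq_of_forall_le (card_sdiff_comm hst)
    fun j hj i hi => h i (mem_sdiff.1 hi).1 j (mem_sdiff.1 hj).2

end Finset

section RandomFinset

variable {Ω ι : Type*} [DecidableEq ι] {m m₀ : MeasurableSpace Ω} {μ : Measure Ω}
  {D D' : Ω → Finset ι} {f g : Ω → ι → ℝ} {X : Ω → ι}

theorem integrable_ite_eq [MeasurableSpace ι] [MeasurableSingletonClass ι] [IsFiniteMeasure μ]
    (hX : Measurable X) (i : ι) : Integrable (fun ω => if X ω = i then (1 : ℝ) else 0) μ := by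
  refine ((integrable_const (1 : ℝ)).indicator (hX (measurableSet_singleton i))).congr ?_
  exact .of_forall fun ω => by by_cases h : X ω = i <;> simp [h]

variable [Fintype ι]

theorem Finset.sum_mem_eq_sum_indicator (D : Ω → Finset ι) (f : Ω → ι → ℝ) (ω : Ω) :
    ∑ i ∈ D ω, f ω i = ∑ i, {ω | i ∈ D ω}.indicator (f · i) ω := by
  simp only [Set.indicator_apply, Set.mem_ofPred_eq, Finset.sum_ite_mem, Finset.univ_inter]

theorem integrable_sum_mem (hD : ∀ i, MeasurableSet {ω | i ∈ D ω})
    (hf : ∀ i, Integrable (f · i) μ) : Integrable (fun ω => ∑ i ∈ D ω, f ω i) μ := by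
  simp_rw [Finset.sum_mem_eq_sum_indicator D f]
  exact integrable_finsetSum _ fun i _ => (hf i).indicator (hD i)

theorem integral_sum_mem (hD : ∀ i, MeasurableSet {ω | i ∈ D ω})
    (hf : ∀ i, Integrable (f · i) μ) :
    ∫ ω, ∑ i ∈ D ω, f ω i ∂μ = ∑ i, ∫ ω in {ω | i ∈ D ω}, f ω i ∂μ := by
  simp_rw [Finset.sum_mem_eq_sum_indicator D f]
  rw [integral_finsetSum _ fun i _ => (hf i).indicator (hD i)]
  simp_rw [integral_indicator (hD _)]

theorem integral_sum_mem_eq_of_condExp_ae_eq (hm : m ≤ m₀) [SigmaFinite (μ.trim hm)]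
    (hD : ∀ i, MeasurableSet[m] {ω | i ∈ D ω}) (hf : ∀ i, Integrable (f · i) μ)
    (hfg : ∀ i, μ[(f · i) | m] =ᵐ[μ] (g · i)) :
    ∫ ω, ∑ i ∈ D ω, f ω i ∂μ = ∫ ω, ∑ i ∈ D ω, g ω i ∂μ := by
  have hg i : Integrable (g · i) μ := integrable_condExp.congr (hfg i)
  rw [integral_sum_mem (fun i => hm _ (hD i)) hf, integral_sum_mem (fun i => hm _ (hD i)) hg]
  refine Finset.sum_congr rfl fun i _ => ?_
  rw [← setIntegral_condExp hm (hf i) (hD i)]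
  exact setIntegral_congr_ae (hm _ (hD i)) ((hfg i).mono fun ω h _ => h)

theorem integrable_ite_mem [MeasurableSpace ι] [MeasurableSingletonClass ι] [IsFiniteMeasure μ]
    (hX : Measurable X) (hD : ∀ i, MeasurableSet {ω | i ∈ D ω}) :
    Integrable (fun ω => if X ω ∈ D ω then (1 : ℝ) else 0) μ := by
  refine (integrable_sum_mem hD (integrable_ite_eq hX)).congr (.of_forall fun ω => ?_)
  exact Finset.sum_ite_eq (D ω) (X ω) fun _ => 1

theorem integral_ite_mem_eq_integral_sum [MeasurableSpace ι] [MeasurableSingletonClass ι]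
    [IsFiniteMeasure μ] (hm : m ≤ m₀) (hX : Measurable X) (hD : ∀ i, MeasurableSet[m] {ω | i ∈ D ω})
    (hg : ∀ i, μ[fun ω => if X ω = i then (1 : ℝ) else 0 | m] =ᵐ[μ] (g · i)) :
    ∫ ω, (if X ω ∈ D ω then (1 : ℝ) else 0) ∂μ = ∫ ω, ∑ i ∈ D ω, g ω i ∂μ := by
  simp_rw [← Finset.sum_ite_eq (D _) (X _) fun _ => (1 : ℝ)]
  exact integral_sum_mem_eq_of_condExp_ae_eq hm hD (integrable_ite_eq hX) hg

theorem integral_ite_mem_le_of_forall_notMem_le [MeasurableSpace ι] [MeasurableSingletonClass ι]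
    [IsFiniteMeasure μ] (hm : m ≤ m₀) (hX : Measurable X)
    (hD : ∀ i, MeasurableSet[m] {ω | i ∈ D ω}) (hD' : ∀ i, MeasurableSet[m] {ω | i ∈ D' ω})
    (hg : ∀ i, μ[fun ω => if X ω = i then (1 : ℝ) else 0 | m] =ᵐ[μ] (g · i))
    (hcard : ∀ ω, (D ω).card = (D' ω).card) (htop : ∀ ω, ∀ i ∈ D' ω, ∀ j ∉ D' ω, g ω j ≤ g ω i) :
    ∫ ω, (if X ω ∈ D ω then (1 : ℝ) else 0) ∂μ ≤ ∫ ω, (if X ω ∈ D' ω then (1 : ℝ) else 0) ∂μ := by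
  have hg_int i : Integrable (g · i) μ := integrable_condExp.congr (hg i)
  rw [integral_ite_mem_eq_integral_sum hm hX hD hg, integral_ite_mem_eq_integral_sum hm hX hD' hg]
  exact integral_mono (integrable_sum_mem (fun i => hm _ (hD i)) hg_int)
    (integrable_sum_mem (fun i => hm _ (hD' i)) hg_int)
    fun ω => Finset.sum_le_sum_of_card_eq_of_forall_notMem_le (hcard ω) (htop ω)

end RandomFinset

section Cesaro

variable {Ω : Type*} {m₀ : MeasurableSpace Ω} {μ : Measure Ω}

theorem norm_inv_mul_sum_Icc_le_one {x : ℕ → ℝ} (hx : ∀ k, ‖x k‖ ≤ 1) (K : ℕ) :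
    ‖(K : ℝ)⁻¹ * ∑ k ∈ Finset.Icc 1 K, x k‖ ≤ 1 := by
  rcases K.eq_zero_or_pos with rfl | hK
  · simp
  calc ‖(K : ℝ)⁻¹ * ∑ k ∈ Finset.Icc 1 K, x k‖
      ≤ (K : ℝ)⁻¹ * ∑ k ∈ Finset.Icc 1 K, (1 : ℝ) := by
        rw [norm_mul, norm_inv, RCLike.norm_natCast]
        gcongr
        exact (norm_sum_le _ _).trans (Finset.sum_le_sum fun k _ => hx k)
    _ = 1 := by simp [hK.ne']

theorem tendsto_inv_mul_sum_Icc_integral [IsProbabilityMeasure μ] {x : ℕ → Ω → ℝ} {a : ℝ}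
    (hx_int : ∀ k, 1 ≤ k → Integrable (x k) μ) (hx_le : ∀ k ω, ‖x k ω‖ ≤ 1)
    (ha : ∀ᵐ ω ∂μ, Tendsto (fun K : ℕ => (K : ℝ)⁻¹ * ∑ k ∈ Finset.Icc 1 K, x k ω) atTop (𝓝 a)) :
    Tendsto (fun K : ℕ => (K : ℝ)⁻¹ * ∑ k ∈ Finset.Icc 1 K, ∫ ω, x k ω ∂μ) atTop (𝓝 a) := by
  have hsum_int K : Integrable (fun ω => ∑ k ∈ Finset.Icc 1 K, x k ω) μ :=
    integrable_finsetSum _ fun k hk => hx_int k (Finset.mem_Icc.1 hk).1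
  have := tendsto_integral_of_dominated_convergence (fun _ => (1 : ℝ))
    (fun K => ((hsum_int K).const_mul _).aestronglyMeasurable) (integrable_const 1)
    (fun K => .of_forall fun ω => norm_inv_mul_sum_Icc_le_one (hx_le · ω) K) ha
  simp_rw [integral_const_mul, integral_finsetSum _ fun k hk => hx_int k (Finset.mem_Icc.1 hk).1]
    at this
  simpa using this

theorem le_of_tendsto_inv_mul_sum_Icc [IsProbabilityMeasure μ] {x y : ℕ → Ω → ℝ} {a b : ℝ}
    (hx_int : ∀ k, 1 ≤ k → Integrable (x k) μ) (hy_int : ∀ k, 1 ≤ k → Integrable (y k) μ)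
    (hx_le : ∀ k ω, ‖x k ω‖ ≤ 1) (hy_le : ∀ k ω, ‖y k ω‖ ≤ 1)
    (hxy : ∀ k, 1 ≤ k → ∫ ω, x k ω ∂μ ≤ ∫ ω, y k ω ∂μ)
    (ha : ∀ᵐ ω ∂μ, Tendsto (fun K : ℕ => (K : ℝ)⁻¹ * ∑ k ∈ Finset.Icc 1 K, x k ω) atTop (𝓝 a))
    (hb : ∀ᵐ ω ∂μ, Tendsto (fun K : ℕ => (K : ℝ)⁻¹ * ∑ k ∈ Finset.Icc 1 K, y k ω) atTop (𝓝 b)) :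
    a ≤ b :=
  le_of_tendsto_of_tendsto' (tendsto_inv_mul_sum_Icc_integral hx_int hx_le ha)
    (tendsto_inv_mul_sum_Icc_integral hy_int hy_le hb) fun K =>
      mul_le_mul_of_nonneg_left (Finset.sum_le_sum fun k hk => hxy k (Finset.mem_Icc.1 hk).1)
        (by positivity)

end Cesaro

theorem hr_stationary_hit_probability_general
    {Ω : Type*} {𝒜 : MeasurableSpace Ω} (μ : Measure Ω) [IsProbabilityMeasure μ]
    (ℱ : ℕ → MeasurableSpace Ω) (hℱ_le : ∀ k, ℱ k ≤ 𝒜)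
    (n B : ℕ)
    (R : ℕ → Ω → Fin n) (hR : ∀ k, Measurable[ℱ k] (R k))
    (p : ℕ → Ω → Fin n → ℝ)
    (hp_cond : ∀ k, 1 ≤ k → ∀ i : Fin n,
      μ[(fun ω => if R k ω = i then (1 : ℝ) else 0) | ℱ (k - 1)]
        =ᵐ[μ] fun ω => p k ω i)
    -- an arbitrary non-anticipative caching policy
    (C : ℕ → Ω → Finset (Fin n))
    (hC_meas : ∀ k, 1 ≤ k → ∀ i : Fin n, MeasurableSet[ℱ (k - 1)] {ω | i ∈ C k ω})
    (hC_card : ∀ k ω, (C k ω).card = B)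
    -- the HR-E rule
    (CHR : ℕ → Ω → Finset (Fin n))
    (hCHR_meas : ∀ k, 1 ≤ k → ∀ i : Fin n, MeasurableSet[ℱ (k - 1)] {ω | i ∈ CHR k ω})
    (hCHR_card : ∀ k ω, (CHR k ω).card = B)
    (hCHR_top : ∀ k ω, ∀ i ∈ CHR k ω, ∀ j ∉ CHR k ω, p k ω j ≤ p k ω i)
    -- existence of the almost-sure Cesàro limits (stationary hit probabilities)
    (hπ hHR : ℝ)
    (hπ_lim : ∀ᵐ ω ∂μ, Tendsto
      (fun K : ℕ => (K : ℝ)⁻¹ * ∑ k ∈ Finset.Icc 1 K, if R k ω ∈ C k ω then (1 : ℝ) else 0)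
      atTop (𝓝 hπ))
    (hHR_lim : ∀ᵐ ω ∂μ, Tendsto
      (fun K : ℕ => (K : ℝ)⁻¹ * ∑ k ∈ Finset.Icc 1 K, if R k ω ∈ CHR k ω then (1 : ℝ) else 0)
      atTop (𝓝 hHR)) :
    hπ ≤ hHR := by
  have hR_meas k : Measurable (R k) := (hR k).mono (hℱ_le k) le_rfl
  have hit_le_one (D : ℕ → Ω → Finset (Fin n)) k ω :
      ‖if R k ω ∈ D k ω then (1 : ℝ) else 0‖ ≤ 1 := by
    split_ifs <;> simp
  refine le_of_tendsto_inv_mul_sum_Icc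
    (fun k hk => integrable_ite_mem (hR_meas k) fun i => hℱ_le _ _ (hC_meas k hk i))
    (fun k hk => integrable_ite_mem (hR_meas k) fun i => hℱ_le _ _ (hCHR_meas k hk i))
    (hit_le_one C) (hit_le_one CHR) (fun k hk => ?_) hπ_lim hHR_lim
  exact integral_ite_mem_le_of_forall_notMem_le (hℱ_le (k - 1)) (hR_meas k) (hC_meas k hk)
    (hCHR_meas k hk) (hp_cond k hk) (fun ω => (hC_card k ω).trans (hCHR_card k ω).symm)
    (hCHR_top k)

/-- Theorem (Stationary hit probability): if the almost-sure Cesàro hit frequencies of a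
non-anticipative policy and of the HR-E rule exist, then the latter is at least the former. -/
theorem hr_stationary_hit_probability
    {Ω : Type*} {𝒜 : MeasurableSpace Ω} (μ : Measure Ω) [IsProbabilityMeasure μ]
    (ℱ : ℕ → MeasurableSpace Ω) (hℱ_le : ∀ k, ℱ k ≤ 𝒜) (hℱ_mono : Monotone ℱ)
    (n B : ℕ) (hB : B ≤ n)
    (R : ℕ → Ω → Fin n) (hR : ∀ k, Measurable[ℱ k] (R k))
    (p : ℕ → Ω → Fin n → ℝ)
    (hp_meas : ∀ k, 1 ≤ k → Measurable[ℱ (k - 1)] (p k))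
    (hp_nonneg : ∀ k ω i, 0 ≤ p k ω i)
    (hp_sum : ∀ k ω, ∑ i, p k ω i = 1)
    (hp_cond : ∀ k, 1 ≤ k → ∀ i : Fin n,
      μ[(fun ω => if R k ω = i then (1 : ℝ) else 0) | ℱ (k - 1)]
        =ᵐ[μ] fun ω => p k ω i)
    -- an arbitrary non-anticipative caching policy
    (C : ℕ → Ω → Finset (Fin n))
    (hC_meas : ∀ k, 1 ≤ k → ∀ i : Fin n, MeasurableSet[ℱ (k - 1)] {ω | i ∈ C k ω})
    (hC_card : ∀ k ω, (C k ω).card = B)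
    -- the HR-E rule
    (CHR : ℕ → Ω → Finset (Fin n))
    (hCHR_meas : ∀ k, 1 ≤ k → ∀ i : Fin n, MeasurableSet[ℱ (k - 1)] {ω | i ∈ CHR k ω})
    (hCHR_card : ∀ k ω, (CHR k ω).card = B)
    (hCHR_top : ∀ k ω, ∀ i ∈ CHR k ω, ∀ j ∉ CHR k ω, p k ω j ≤ p k ω i)
    -- existence of the almost-sure Cesàro limits (stationary hit probabilities)
    (hπ hHR : ℝ)
    (hπ_lim : ∀ᵐ ω ∂μ, Tendsto
      (fun K : ℕ => (K : ℝ)⁻¹ * ∑ k ∈ Finset.Icc 1 K, if R k ω ∈ C k ω then (1 : ℝ) else 0)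
      atTop (𝓝 hπ))
    (hHR_lim : ∀ᵐ ω ∂μ, Tendsto
      (fun K : ℕ => (K : ℝ)⁻¹ * ∑ k ∈ Finset.Icc 1 K, if R k ω ∈ CHR k ω then (1 : ℝ) else 0)
      atTop (𝓝 hHR)) :
    hπ ≤ hHR :=
  hr_stationary_hit_probability_general μ ℱ hℱ_le n B R hR p hp_cond C hC_meas hC_card CHR hCHR_meas
    hCHR_card hCHR_top hπ hHR hπ_lim hHR_lim
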